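/- Let (X₁, Γ₁, Φ₁) and (X₂, Γ₂, Φ₂) be minimal equicontinuous Cantor actions which are return equivalent, and suppose that the discriminant groups D(Φ₁,x₁) and D(Φ₂,x₂) are trivial for basepoints x₁ ∈ X₁ and x₂ ∈ X₂. Then the Steinitz orders Π[G(Φ₁)] and Π[G(Φ₂)] are asymptotically equivalent. -/

import Mathlib

noncomputable section

open Set Topology

/-! ### The group of homeomorphisms -/

namespace Homeomorph

variable {X : Type*} [TopologicalSpace X]

instance instGroup' : Group (X ≃ₜ X) where
  mul f g := g.trans f
  one := Homeomorph.refl X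
  inv := Homeomorph.symm
  mul_assoc f g h := rfl
  one_mul f := rfl
  mul_one f := rfl
  inv_mul_cancel f := Homeomorph.ext fun x => f.symm_apply_apply x

@[simp] theorem mul_apply' (f g : X ≃ₜ X) (x : X) : (f * g) x = f (g x) := rfl
@[simp] theorem one_apply' (x : X) : (1 : X ≃ₜ X) x = x := rfl
@[simp] theorem inv_eq_symm (f : X ≃ₜ X) : f⁻¹ = f.symm := rfl

/-- The uniform topology (topology of uniform convergence, equivalently for a compact
metric space the compact-open topology) on the group of homeomorphisms of a compact
metric space, as the metric topology of the sup-metric. -/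
instance instMetricSpaceHomeomorph {Y : Type*} [MetricSpace Y] [CompactSpace Y] :
    MetricSpace (Y ≃ₜ Y) :=
  MetricSpace.induced (fun h => (⟨h, h.continuous⟩ : C(Y, Y)))
    (fun f g hfg => Homeomorph.ext fun x => congrFun (congrArg ContinuousMap.toFun hfg) x)
    inferInstance

end Homeomorph

namespace Homeomorph

variable {Y : Type*} [MetricSpace Y] [CompactSpace Y]

theorem dist_eq_contMap (f g : Y ≃ₜ Y) :
    dist f g = dist (⟨f, f.continuous⟩ : C(Y, Y)) (⟨g, g.continuous⟩ : C(Y, Y)) := rfl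

theorem dist_apply_le (f g : Y ≃ₜ Y) (x : Y) : dist (f x) (g x) ≤ dist f g :=
  ContinuousMap.dist_apply_le_dist (f := (⟨f, f.continuous⟩ : C(Y, Y)))
    (g := (⟨g, g.continuous⟩ : C(Y, Y))) x

theorem dist_lt_iff' (f g : Y ≃ₜ Y) {C : ℝ} (hC : 0 < C) :
    dist f g < C ↔ ∀ x : Y, dist (f x) (g x) < C := by
  rw [dist_eq_contMap, ContinuousMap.dist_lt_iff hC]
  rfl

instance : IsTopologicalGroup (Y ≃ₜ Y) where
  continuous_mul := by
    rw [Metric.continuous_iff]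
    rintro ⟨f₀, g₀⟩ ε hε
    obtain ⟨δ₁, hδ₁, H₁⟩ := Metric.uniformContinuous_iff.mp
      (CompactSpace.uniformContinuous_of_continuous f₀.continuous) (ε / 2) (by positivity)
    refine ⟨min δ₁ (ε / 2), by positivity, ?_⟩
    rintro ⟨f, g⟩ hd
    have hdf : dist f f₀ < ε / 2 := by
      have h' : dist f f₀ ≤ dist ((f, g)) ((f₀, g₀)) := by
        rw [Prod.dist_eq]; exact le_max_left _ _
      exact (h'.trans_lt hd).trans_le (min_le_right _ _)
    have hdg : dist g g₀ < δ₁ := by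
      have h' : dist g g₀ ≤ dist ((f, g)) ((f₀, g₀)) := by
        rw [Prod.dist_eq]; exact le_max_right _ _
      exact (h'.trans_lt hd).trans_le (min_le_left _ _)
    rw [dist_lt_iff' _ _ hε]
    intro x
    have h1 : dist (f (g x)) (f₀ (g x)) < ε / 2 :=
      lt_of_le_of_lt (dist_apply_le f f₀ (g x)) hdf
    have h2 : dist (f₀ (g x)) (f₀ (g₀ x)) < ε / 2 :=
      H₁ (lt_of_le_of_lt (dist_apply_le g g₀ x) hdg)
    calc dist ((f * g) x) ((f₀ * g₀) x) ≤ dist (f (g x)) (f₀ (g x)) + dist (f₀ (g x)) (f₀ (g₀ x)) :=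
          dist_triangle _ _ _
      _ < ε / 2 + ε / 2 := by exact add_lt_add h1 h2
      _ = ε := by ring
  continuous_inv := by
    rw [Metric.continuous_iff]
    intro f₀ ε hε
    obtain ⟨δ, hδ, H⟩ := Metric.uniformContinuous_iff.mp
      (CompactSpace.uniformContinuous_of_continuous f₀.symm.continuous) ε hε
    refine ⟨δ, hδ, ?_⟩
    intro g hdg
    rw [dist_lt_iff' _ _ hε]
    intro y
    have key : dist (g (g.symm y)) (f₀ (g.symm y)) < δ :=
      lt_of_le_of_lt (dist_apply_le g f₀ (g.symm y)) hdg
    have h2 := H key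
    have h3 : dist (f₀.symm (g (g.symm y))) (f₀.symm (f₀ (g.symm y))) < ε := h2
    rw [Homeomorph.apply_symm_apply, Homeomorph.symm_apply_apply] at h3
    rw [dist_comm] at h3
    simpa using h3
end Homeomorph

/-! ### Steinitz (supernatural) numbers -/

/-- A Steinitz number: a formal product of primes with exponents in `ℕ∞`. -/
def SteinitzNum : Type := Nat.Primes → ℕ∞

namespace SteinitzNum

/-- The Steinitz number associated to a natural number. -/
def ofNat (n : ℕ) : SteinitzNum := fun p => (n.factorization (p : ℕ) : ℕ∞)

/-- Multiplication of Steinitz numbers adds the exponents at each prime. -/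
instance : Mul SteinitzNum := ⟨fun a b p => a p + b p⟩

/-- The least common multiple of a collection of positive integers, as a Steinitz number:
its exponent at `p` is the supremum of the `p`-adic valuations of the elements. -/
def lcmSet (S : Set ℕ) : SteinitzNum := fun p => ⨆ n ∈ S, (n.factorization (p : ℕ) : ℕ∞)

/-- Two Steinitz numbers are asymptotically equivalent if they agree after multiplication
by positive integers. -/
def AsympEquiv (a b : SteinitzNum) : Prop :=
  ∃ n₀ m₀ : ℕ, 0 < n₀ ∧ 0 < m₀ ∧ ofNat n₀ * a = ofNat m₀ * b

/-- The prime spectrum of a Steinitz number: primes with nonzero exponent. -/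
def primeSpectrum (a : SteinitzNum) : Set Nat.Primes := { p | a p ≠ 0 }

/-- The finite prime spectrum: primes with finite nonzero exponent. -/
def finitePrimeSpectrum (a : SteinitzNum) : Set Nat.Primes := { p | a p ≠ 0 ∧ a p ≠ ⊤ }

/-- The infinite prime spectrum: primes with infinite exponent. -/
def infinitePrimeSpectrum (a : SteinitzNum) : Set Nat.Primes := { p | a p = ⊤ }

end SteinitzNum

/-! ### Steinitz orders for topological groups -/

/-- The Steinitz order of a topological group: the LCM of the orders of the finite
quotients `G/N` over open normal subgroups `N ⊆ G`. -/
def steinitzOrder (G : Type*) [Group G] [TopologicalSpace G] : SteinitzNum :=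
  SteinitzNum.lcmSet
    { n | ∃ N : Subgroup G, N.Normal ∧ IsOpen (N : Set G) ∧ n = Nat.card (G ⧸ N) }

/-- The Steinitz order of a subgroup `D` of a topological group `G`: the LCM of the
cardinalities `|D/(N ∩ D)|` over open normal subgroups `N ⊆ G`. -/
def steinitzOrderOfSubgroup {G : Type*} [Group G] [TopologicalSpace G] (D : Subgroup G) :
    SteinitzNum :=
  SteinitzNum.lcmSet
    { n | ∃ N : Subgroup G, N.Normal ∧ IsOpen (N : Set G) ∧
        n = Nat.card (↥D ⧸ (N.subgroupOf D)) }

/-- The relative Steinitz order of a subgroup `D` of a topological group `G`: the LCM of the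
cardinalities `|G/(N · D)|` over open normal subgroups `N ⊆ G`. -/
def steinitzRelativeOrder {G : Type*} [Group G] [TopologicalSpace G] (D : Subgroup G) :
    SteinitzNum :=
  SteinitzNum.lcmSet
    { n | ∃ N : Subgroup G, N.Normal ∧ IsOpen (N : Set G) ∧ n = Nat.card (G ⧸ (N ⊔ D)) }

/-- A profinite (compact Hausdorff totally disconnected) topological group is topologically
Noetherian if every increasing chain of closed subgroups has a maximal element. -/
def TopologicallyNoetherian (G : Type*) [Group G] [TopologicalSpace G] : Prop :=
  ∀ c : ℕ → Subgroup G, (∀ i, IsClosed (c i : Set G)) → Monotone c → ∃ i₀, ∀ i, c i ≤ c i₀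

/-! ### Cantor actions -/

section CantorActions

variable {X : Type*} [MetricSpace X] {Γ : Type*} [Group Γ]

/-- An action is minimal if every orbit is dense. -/
def IsMinimalAction (Φ : Γ →* (X ≃ₜ X)) : Prop :=
  ∀ x : X, Dense (Set.range fun g : Γ => Φ g x)

/-- An action is equicontinuous if it satisfies the uniform `ε`-`δ` condition with respect
to the metric. -/
def IsEquicontinuousAction (Φ : Γ →* (X ≃ₜ X)) : Prop :=
  ∀ ε : ℝ, 0 < ε → ∃ δ : ℝ, 0 < δ ∧
    ∀ x y : X, dist x y < δ → ∀ g : Γ, dist (Φ g x) (Φ g y) < ε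

variable [CompactSpace X]

/-- `G(Φ)`: the closure of the image of `Γ` in `Homeo(X)`, in the uniform topology. -/
def profiniteClosure (Φ : Γ →* (X ≃ₜ X)) : Subgroup (X ≃ₜ X) :=
  Φ.range.topologicalClosure

/-- The discriminant group: the isotropy subgroup of `G(Φ)` at `x`. -/
def discriminant (Φ : Γ →* (X ≃ₜ X)) (x : X) : Subgroup (profiniteClosure Φ) where
  carrier := { h | (h : X ≃ₜ X) x = x }
  one_mem' := rfl
  mul_mem' := by
    intro a b ha hb
    simp only [Set.mem_setOf_eq] at *
    show ((a : X ≃ₜ X) * (b : X ≃ₜ X)) x = x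
    rw [Homeomorph.mul_apply', hb, ha]
  inv_mem' := by
    intro a ha
    simp only [Set.mem_setOf_eq] at *
    show ((a : X ≃ₜ X)⁻¹) x = x
    rw [Homeomorph.inv_eq_symm]
    conv_lhs => rw [← ha]
    exact Homeomorph.symm_apply_apply _ _

/-- The Steinitz order `Π[G(Φ)]` of a Cantor action. -/
def steinitzOrderAction (Φ : Γ →* (X ≃ₜ X)) : SteinitzNum :=
  steinitzOrder ↥(profiniteClosure Φ)

/-- The Steinitz order `Π[D(Φ,x)]` of the discriminant of a Cantor action. -/
def steinitzOrderDisc (Φ : Γ →* (X ≃ₜ X)) (x : X) : SteinitzNum :=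
  steinitzOrderOfSubgroup (discriminant Φ x)

/-- The relative Steinitz order `Π[G(Φ) : D(Φ,x)]` of a Cantor action. -/
def steinitzOrderRel (Φ : Γ →* (X ≃ₜ X)) (x : X) : SteinitzNum :=
  steinitzRelativeOrder (discriminant Φ x)

end CantorActions

/-! ### Adapted sets, holonomy and return equivalence -/

section Adapted

variable {X : Type*} [MetricSpace X] {Γ : Type*} [Group Γ]

/-- A nonempty clopen subset `U ⊆ X` is adapted to the action `Φ` if every group element
either fixes `U` or moves it entirely off of itself. -/
def IsAdaptedSet (Φ : Γ →* (X ≃ₜ X)) (U : Set X) : Prop :=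
  U.Nonempty ∧ IsClopen U ∧ ∀ g : Γ, ((Φ g) '' U ∩ U).Nonempty → (Φ g) '' U = U

/-- The stabilizer subgroup `Γ_U` of an adapted set. -/
def adaptedStabilizer (Φ : Γ →* (X ≃ₜ X)) (U : Set X) : Subgroup Γ where
  carrier := { g | (Φ g) '' U = U }
  one_mem' := by
    show ⇑(Φ 1) '' U = U
    rw [map_one]; exact Set.image_id U
  mul_mem' := by
    intro a b ha hb
    simp only [Set.mem_setOf_eq] at *
    rw [map_mul]
    show ((Φ a) * (Φ b)) '' U = U
    have : (((Φ a) * (Φ b) : X ≃ₜ X) : X → X) = (Φ a) ∘ (Φ b) := rfl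
    rw [this, Set.image_comp, hb, ha]
  inv_mem' := by
    intro a ha
    simp only [Set.mem_setOf_eq] at *
    rw [map_inv, Homeomorph.inv_eq_symm]
    conv_lhs => rw [← ha]
    rw [← Set.image_comp]
    simp

/-- The homeomorphism of an invariant set induced by a homeomorphism of `X`. -/
def restrictHomeo (h : X ≃ₜ X) {U : Set X} (hU : h '' U = U) : U ≃ₜ U :=
  (h.image U).trans (Homeomorph.setCongr hU)

@[simp] theorem restrictHomeo_coe (h : X ≃ₜ X) {U : Set X} (hU : h '' U = U) (x : U) :
    (restrictHomeo h hU x : X) = h x := rfl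

/-- The holonomy homomorphism of an adapted set: restriction of the stabilizer to `U`. -/
def holonomyHom (Φ : Γ →* (X ≃ₜ X)) (U : Set X) :
    adaptedStabilizer Φ U →* (↥U ≃ₜ ↥U) where
  toFun g := restrictHomeo (Φ (g : Γ)) g.2
  map_one' := by
    ext x
    show ((restrictHomeo (Φ ((1 : adaptedStabilizer Φ U) : Γ)) _ x : X) = _)
    simp
  map_mul' := by
    intro a b
    ext x
    show ((restrictHomeo (Φ ((a * b : adaptedStabilizer Φ U) : Γ)) _ x : X) = _)
    simp only [restrictHomeo_coe, Subgroup.coe_mul, map_mul]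
    rfl

/-- The holonomy group `H_U` of an adapted set: the image of the stabilizer in `Homeo(U)`. -/
def holonomyGroup (Φ : Γ →* (X ≃ₜ X)) (U : Set X) : Subgroup (↥U ≃ₜ ↥U) :=
  (holonomyHom Φ U).range

end Adapted

/-- Two Cantor actions are return equivalent if they admit adapted sets whose holonomy
actions are isomorphic, via a homeomorphism between the adapted sets together with a
compatible isomorphism of the holonomy groups. -/
def ReturnEquivalent
    {X₁ : Type*} [MetricSpace X₁] {Γ₁ : Type*} [Group Γ₁]
    {X₂ : Type*} [MetricSpace X₂] {Γ₂ : Type*} [Group Γ₂]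
    (Φ₁ : Γ₁ →* (X₁ ≃ₜ X₁)) (Φ₂ : Γ₂ →* (X₂ ≃ₜ X₂)) : Prop :=
  ∃ (U₁ : Set X₁) (U₂ : Set X₂), IsAdaptedSet Φ₁ U₁ ∧ IsAdaptedSet Φ₂ U₂ ∧
    ∃ (h : ↥U₁ ≃ₜ ↥U₂) (θ : holonomyGroup Φ₁ U₁ ≃* holonomyGroup Φ₂ U₂),
      ∀ k : holonomyGroup Φ₁ U₁,
        ((θ k : ↥U₂ ≃ₜ ↥U₂)) = h.symm.trans (((k : ↥U₁ ≃ₜ ↥U₁)).trans h)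

section Regularity

variable {X : Type*} [MetricSpace X]

/-- An action of a group `H` on `X` through a homomorphism `ρ : H →* Homeo(X)` is locally
quasi-analytic if there is `ε > 0` so that for every nonempty open `U` of diameter less
than `ε`, any element acting as the identity on a nonempty open subset `V ⊆ U` with
`ρ g (V) = V` acts as the identity on all of `U`. -/
def IsLocallyQuasiAnalytic {H : Type*} [Group H] (ρ : H →* (X ≃ₜ X)) : Prop :=
  ∃ ε : ℝ, 0 < ε ∧ ∀ U : Set X, IsOpen U → U.Nonempty → Metric.diam U < ε →
    ∀ V : Set X, V ⊆ U → IsOpen V → V.Nonempty →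
      ∀ g : H, (ρ g) '' V = V → (∀ x ∈ V, ρ g x = x) → ∀ x ∈ U, ρ g x = x

variable [CompactSpace X] {Γ : Type*} [Group Γ]

/-- A Cantor action is stable if the induced action of `G(Φ)` on `X` is locally
quasi-analytic; otherwise it is wild. -/
def IsStableAction (Φ : Γ →* (X ≃ₜ X)) : Prop :=
  IsLocallyQuasiAnalytic (profiniteClosure Φ).subtype

/-- An action is topologically free if the set of points fixed by some nontrivial group
element is meagre. -/
def IsTopologicallyFree (Φ : Γ →* (X ≃ₜ X)) : Prop :=
  IsMeagre { x : X | ∃ g : Γ, g ≠ 1 ∧ Φ g x = x }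

end Regularity

/-!
The closure `G(Φ)` of an equicontinuous action is compact (Arzelà–Ascoli), so the stabilizer
`G_U` of an adapted set `U`, being open, has finite index and `Π[G(Φ)] = [G(Φ) : G_U] · Π[G_U]`.
If the discriminant is trivial, an element of `G(Φ)` that fixes the open set `U` pointwise is
trivial (conjugate it so that it fixes the basepoint), so restriction to `U` embeds the compact
group `G_U` onto the closure of the holonomy group `H_U`. Return equivalence conjugates
`H_{U₁}` onto `H_{U₂}`, hence the two closures have the same Steinitz order, and the Steinitz
orders of the actions differ only by the finite factors `[G(Φᵢ) : G_{Uᵢ}]`.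
-/

namespace SteinitzNum

theorem ofNat_apply (n : ℕ) (p : Nat.Primes) : ofNat n p = n.factorization p := rfl

theorem mul_apply (a b : SteinitzNum) (p : Nat.Primes) : (a * b) p = a p + b p := rfl

theorem lcmSet_apply (S : Set ℕ) (p : Nat.Primes) :
    lcmSet S p = ⨆ n ∈ S, (n.factorization p : ℕ∞) := rfl

theorem factorization_le_lcmSet_of_dvd {S : Set ℕ} {m n : ℕ} (hm : m ∈ S) (hm0 : m ≠ 0)
    (hnm : n ∣ m) (p : Nat.Primes) : (n.factorization p : ℕ∞) ≤ lcmSet S p := by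
  have hn0 : n ≠ 0 := ne_zero_of_dvd_ne_zero hm0 hnm
  exact (Nat.cast_le.2 ((Nat.factorization_le_iff_dvd hn0 hm0).2 hnm p)).trans
    (le_iSup₂_of_le m hm le_rfl)

theorem asympEquiv_ofNat_mul {m n : ℕ} (hm : 0 < m) (hn : 0 < n) (a : SteinitzNum) :
    AsympEquiv (ofNat m * a) (ofNat n * a) :=
  ⟨n, m, hn, hm, funext fun _ => add_left_comm _ _ _⟩

end SteinitzNum

open SteinitzNum

section SteinitzOrder

variable {G : Type*} [Group G] [TopologicalSpace G]

/-- An infinite quotient `G ⧸ N` has `Nat.card = 0` and so contributes nothing to the LCM. -/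
def openNormalQuotientCards (G : Type*) [Group G] [TopologicalSpace G] : Set ℕ :=
  { n | ∃ N : Subgroup G, N.Normal ∧ IsOpen (N : Set G) ∧ n = Nat.card (G ⧸ N) }

theorem steinitzOrder_eq_lcmSet : steinitzOrder G = lcmSet (openNormalQuotientCards G) := rfl

theorem one_mem_openNormalQuotientCards : 1 ∈ openNormalQuotientCards G :=
  ⟨⊤, inferInstance, isOpen_univ, Subgroup.index_top.symm⟩

theorem openNormalQuotientCards_subset {G' : Type*} [Group G'] [TopologicalSpace G']
    (e : G ≃ₜ* G') : openNormalQuotientCards G ⊆ openNormalQuotientCards G' := by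
  rintro _ ⟨N, hN, hNO, rfl⟩
  have := hN.map (e : G →* G') e.surjective
  refine ⟨N.map (e : G →* G'), this, ?_,
    Nat.card_congr (QuotientGroup.congr N (N.map (e : G →* G')) (e : G ≃* G') rfl).toEquiv⟩
  rw [Subgroup.coe_map]
  exact (e : G ≃ₜ G').isOpenMap _ hNO

theorem steinitzOrder_congr {G' : Type*} [Group G'] [TopologicalSpace G'] (e : G ≃ₜ* G') :
    steinitzOrder G = steinitzOrder G' :=
  congrArg lcmSet
    ((openNormalQuotientCards_subset e).antisymm (openNormalQuotientCards_subset e.symm))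

theorem steinitzOrder_range_of_isEmbedding {H : Type*} [Group H] [TopologicalSpace H]
    (f : G →* H) (hf : IsEmbedding f) : steinitzOrder f.range = steinitzOrder G := by
  let e : G ≃* f.range := MonoidHom.ofInjective hf.injective
  refine (steinitzOrder_congr ⟨e, hf.continuous.subtype_mk _, ?_⟩).symm
  have hfe : f ∘ e.symm = Subtype.val := funext (MonoidHom.apply_ofInjective_symm hf.injective)
  rw [hf.continuous_iff]
  exact hfe ▸ continuous_subtype_val

variable [IsTopologicalGroup G]

theorem factorization_index_le_steinitzOrder (L : Subgroup G) (hL : IsOpen (L : Set G))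
    [L.FiniteIndex] (p : Nat.Primes) : (L.index.factorization p : ℕ∞) ≤ steinitzOrder G p := by
  have hcore : IsOpen (L.normalCore : Set G) :=
    Subgroup.isOpen_of_isClosed_of_finiteIndex _
      (L.normalCore_isClosed (L.isClosed_of_isOpen hL))
  exact factorization_le_lcmSet_of_dvd (S := openNormalQuotientCards G)
    ⟨_, L.normalCore_normal, hcore, rfl⟩
    Subgroup.FiniteIndex.index_ne_zero (Subgroup.index_dvd_of_le L.normalCore_le) p

theorem steinitzOrder_eq_ofNat_index_mul (H : Subgroup G) (hH : IsOpen (H : Set G))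
    [H.FiniteIndex] : steinitzOrder G = ofNat H.index * steinitzOrder H := by
  funext p
  rw [mul_apply, ofNat_apply, steinitzOrder_eq_lcmSet, steinitzOrder_eq_lcmSet, lcmSet_apply,
    lcmSet_apply, ENat.add_biSup ⟨1, one_mem_openNormalQuotientCards⟩]
  apply le_antisymm
  · refine iSup₂_le ?_
    rintro _ ⟨N, hN, hNO, rfl⟩
    obtain hN0 | hN0 := eq_or_ne N.index 0
    · simp [← Subgroup.index_eq_card, hN0]
    have hrel0 : N.relIndex H ≠ 0 := ne_zero_of_dvd_ne_zero hN0 (N.relIndex_dvd_index_of_normal H)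
    -- `[G : N]` divides `[G : N ⊓ H] = [H : N ⊓ H] [G : H]`, and `[H : N ⊓ H] = [H : N]`.
    have hdvd : N.index ∣ H.index * N.relIndex H := by
      rw [mul_comm, ← Subgroup.inf_relIndex_right, Subgroup.relIndex_mul_index inf_le_right]
      exact Subgroup.index_dvd_of_le inf_le_left
    have hmem : N.relIndex H ∈ openNormalQuotientCards H :=
      ⟨N.subgroupOf H, hN.subgroupOf H, hNO.preimage continuous_subtype_val, rfl⟩
    refine le_iSup₂_of_le _ hmem ?_
    rw [← Nat.cast_add, ← Finsupp.add_apply,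
      ← Nat.factorization_mul H.index_ne_zero_of_finite hrel0, Nat.cast_le]
    exact (Nat.factorization_le_iff_dvd hN0 (mul_ne_zero H.index_ne_zero_of_finite hrel0)).2 hdvd p
  · refine iSup₂_le ?_
    rintro _ ⟨M, -, hMO, rfl⟩
    obtain hM0 | hM0 := eq_or_ne M.index 0
    · refine le_trans ?_ (factorization_index_le_steinitzOrder H hH p)
      simp [← Subgroup.index_eq_card, hM0]
    have : (M.map H.subtype).FiniteIndex :=
      ⟨by rw [Subgroup.index_map_subtype]; exact mul_ne_zero hM0 H.index_ne_zero_of_finite⟩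
    refine le_of_eq_of_le ?_ (factorization_index_le_steinitzOrder (M.map H.subtype)
      (by rw [Subgroup.coe_map]; exact hH.isOpenMap_subtype_val _ hMO) p)
    rw [Subgroup.index_map_subtype, Nat.factorization_mul hM0 H.index_ne_zero_of_finite,
      Finsupp.add_apply, Nat.cast_add, add_comm]
    rfl

end SteinitzOrder

namespace ContinuousMap

variable {X Y : Type*} [TopologicalSpace X] [CompactSpace X] [UniformSpace Y] [CompactSpace Y]
  [T2Space Y]

theorem isCompact_closure_range_of_equicontinuous {ι : Type*} (F : ι → C(X, Y))
    (hF : Equicontinuous fun i => ⇑(F i)) : IsCompact (closure (range F)) := by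
  have hclosed : IsClosedEmbedding (toUniformOnFunIsCompact : C(X, Y) → _) := by
    refine ⟨isUniformEmbedding_toUniformOnFunIsCompact.isEmbedding, ?_⟩
    rw [range_toUniformOnFunIsCompact]
    exact UniformOnFun.isClosed_setOfPred_continuous
      (.of_nhds fun _ => ⟨univ, isCompact_univ, Filter.univ_mem⟩)
  refine ArzelaAscoli.isCompact_closure_of_isClosedEmbedding (fun _ hK => hK) hclosed
    (fun K _ => ?_) fun _ _ _ _ => ⟨univ, isCompact_univ, fun _ _ => mem_univ _⟩
  have : (⇑) ∘ ((↑) : range F → C(X, Y)) = (fun i => ⇑(F i)) ∘ rangeSplitting F := by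
    funext f; simp [apply_rangeSplitting]
  rw [this]
  exact (hF.comp _).equicontinuousOn K

end ContinuousMap

namespace Homeomorph

variable {Y : Type*} [MetricSpace Y] [CompactSpace Y]

theorem isometry_coe_continuousMap : Isometry fun h : Y ≃ₜ Y => (h : C(Y, Y)) :=
  Isometry.of_dist_eq fun _ _ => rfl

theorem isClosedEmbedding_coe_continuousMap_prod_inv :
    IsClosedEmbedding fun h : Y ≃ₜ Y => ((h : C(Y, Y)), ((h⁻¹ : Y ≃ₜ Y) : C(Y, Y))) := by
  have hemb := isometry_coe_continuousMap (Y := Y).isEmbedding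
  refine ⟨(hemb.prodMap hemb).comp (isEmbedding_graph continuous_inv), ?_⟩
  have hrange : range (fun h : Y ≃ₜ Y => ((h : C(Y, Y)), ((h⁻¹ : Y ≃ₜ Y) : C(Y, Y)))) =
      {p | p.2.comp p.1 = .id Y ∧ p.1.comp p.2 = .id Y} := by
    ext p
    refine ⟨?_, fun ⟨hgf, hfg⟩ => ⟨⟨⟨p.1, p.2, DFunLike.congr_fun hgf, DFunLike.congr_fun hfg⟩,
      p.1.continuous, p.2.continuous⟩, rfl⟩⟩
    rintro ⟨h, rfl⟩
    exact ⟨ContinuousMap.ext h.symm_apply_apply, ContinuousMap.ext h.apply_symm_apply⟩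
  rw [hrange]
  exact (isClosed_eq ContinuousMap.continuous_comp' continuous_const).inter
    (isClosed_eq (ContinuousMap.continuous_comp'.comp continuous_swap) continuous_const)

theorem isCompact_topologicalClosure_of_equicontinuous (S : Subgroup (Y ≃ₜ Y))
    (hS : Equicontinuous fun h : S => ⇑(h : Y ≃ₜ Y)) :
    IsCompact (S.topologicalClosure : Set (Y ≃ₜ Y)) := by
  have hK := ContinuousMap.isCompact_closure_range_of_equicontinuous
    (fun h : S => ((h : Y ≃ₜ Y) : C(Y, Y))) hS
  have hmem : ∀ h ∈ S.topologicalClosure,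
      (h : C(Y, Y)) ∈ closure (range fun h : S => ((h : Y ≃ₜ Y) : C(Y, Y))) :=
    fun h hh => map_mem_closure isometry_coe_continuousMap.continuous hh
      fun k hk => ⟨⟨k, hk⟩, rfl⟩
  -- A uniform limit of homeomorphisms need not be one; carrying `h⁻¹` along with `h` forces it.
  rw [isClosedEmbedding_coe_continuousMap_prod_inv.isCompact_iff]
  refine (hK.prod hK).of_isClosed_subset
    (isClosedEmbedding_coe_continuousMap_prod_inv.isClosedMap _ S.isClosed_topologicalClosure) ?_
  rintro _ ⟨h, hh, rfl⟩
  exact ⟨hmem h hh, hmem h⁻¹ (inv_mem hh)⟩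

end Homeomorph

section Adapted

variable {X : Type*} [MetricSpace X] [CompactSpace X]

theorem IsClopen.exists_pos_image_eq_of_dist_lt {U : Set X} (hU : IsClopen U) :
    ∃ ε > 0, ∀ f g : X ≃ₜ X, dist f g < ε → g '' U = U → f '' U = U := by
  obtain ⟨δ₁, hδ₁, hU₁⟩ :=
    hU.isClosed.isCompact.exists_thickening_subset_open hU.isOpen subset_rfl
  obtain ⟨δ₂, hδ₂, hU₂⟩ :=
    hU.compl.isClosed.isCompact.exists_thickening_subset_open hU.compl.isOpen subset_rfl
  refine ⟨min δ₁ δ₂, lt_min hδ₁ hδ₂, fun f g hfg hg => ?_⟩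
  have hmaps : ∀ (V : Set X) (δ : ℝ), g '' V = V → Metric.thickening δ V ⊆ V →
      dist f g < δ → MapsTo f V V := fun V δ hV hVδ hfgδ x hx =>
    hVδ (Metric.mem_thickening_iff.2
      ⟨g x, hV ▸ mem_image_of_mem g hx, (Homeomorph.dist_apply_le f g x).trans_lt hfgδ⟩)
  have hin := hmaps U δ₁ hg hU₁ (hfg.trans_le (min_le_left _ _))
  have hout := hmaps Uᶜ δ₂ (by rw [image_compl_eq g.bijective, hg]) hU₂
    (hfg.trans_le (min_le_right _ _))
  refine hin.image_subset.antisymm (compl_subset_compl.1 ?_)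
  rw [← image_compl_eq f.bijective]
  exact hout.image_subset

theorem dist_restrictHomeo_le {U : Set X} [CompactSpace U] {f g : X ≃ₜ X} (hf : f '' U = U)
    (hg : g '' U = U) : dist (restrictHomeo f hf) (restrictHomeo g hg) ≤ dist f g :=
  (ContinuousMap.dist_le dist_nonneg).2 fun x => Homeomorph.dist_apply_le f g x

theorem continuous_holonomyHom_subtype (K : Subgroup (X ≃ₜ X)) (U : Set X) [CompactSpace U] :
    Continuous (holonomyHom K.subtype U) :=
  (LipschitzWith.of_dist_le_mul (K := 1) fun a b => by
    rw [NNReal.coe_one, one_mul]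
    exact dist_restrictHomeo_le a.2 b.2).continuous

theorem isOpen_adaptedStabilizer_subtype (K : Subgroup (X ≃ₜ X)) {U : Set X} (hU : IsClopen U) :
    IsOpen (adaptedStabilizer K.subtype U : Set K) := by
  obtain ⟨ε, hε, hUε⟩ := hU.exists_pos_image_eq_of_dist_lt
  exact Metric.isOpen_iff.2 fun a ha => ⟨ε, hε, fun b hb => hUε b a hb ha⟩

end Adapted

theorem Subgroup.map_eq_of_mulEquiv {A B : Type*} [Group A] [Group B] (f : A →* B)
    {K : Subgroup A} {L : Subgroup B} (θ : K ≃* L) (hθ : ∀ k, (θ k : B) = f k) : K.map f = L := by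
  ext y
  refine ⟨?_, fun hy => ⟨θ.symm ⟨y, hy⟩, (θ.symm _).2, by rw [← hθ, θ.apply_symm_apply]⟩⟩
  rintro ⟨k, hk, rfl⟩
  exact hθ ⟨k, hk⟩ ▸ (θ _).2

section TopologicalGroup

variable {A B : Type*} [Group A] [TopologicalSpace A] [Group B] [TopologicalSpace B]

theorem Subgroup.topologicalClosure_map_continuousMulEquiv [IsTopologicalGroup A]
    [IsTopologicalGroup B] (e : A ≃ₜ* B) (K : Subgroup A) :
    (K.map (e : A →* B)).topologicalClosure = K.topologicalClosure.map (e : A →* B) :=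
  SetLike.ext' <| by
    simp only [Subgroup.topologicalClosure_coe, Subgroup.coe_map]
    exact ((e : A ≃ₜ B).image_closure _).symm

theorem steinitzOrder_map (e : A ≃ₜ* B) (K : Subgroup A) :
    steinitzOrder (K.map (e : A →* B)) = steinitzOrder K := by
  have hemb : IsEmbedding ((e : A →* B).comp K.subtype) :=
    (e : A ≃ₜ B).isEmbedding.comp IsEmbedding.subtypeVal
  rw [← steinitzOrder_range_of_isEmbedding _ hemb, MonoidHom.range_comp, K.range_subtype]

end TopologicalGroup

namespace Homeomorph

variable {Y Z : Type*} [MetricSpace Y] [CompactSpace Y] [MetricSpace Z] [CompactSpace Z]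

theorem continuous_symm_trans_trans (h : Y ≃ₜ Z) :
    Continuous fun k : Y ≃ₜ Y => h.symm.trans (k.trans h) := by
  rw [isometry_coe_continuousMap.isEmbedding.continuous_iff]
  exact (ContinuousMap.continuous_postcomp (h : C(Y, Z))).comp
    ((ContinuousMap.continuous_precomp (h.symm : C(Z, Y))).comp
      isometry_coe_continuousMap.continuous)

def conjContinuousMulEquiv (h : Y ≃ₜ Z) : (Y ≃ₜ Y) ≃ₜ* (Z ≃ₜ Z) :=
  .mk' { toFun := fun k => h.symm.trans (k.trans h)
         invFun := fun k => h.trans (k.trans h.symm)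
         left_inv := fun k => ext fun y => by simp
         right_inv := fun k => ext fun z => by simp
         continuous_toFun := continuous_symm_trans_trans h
         continuous_invFun := continuous_symm_trans_trans h.symm }
    fun k l => ext fun z => congrArg h (congrArg k (h.symm_apply_apply _).symm)

end Homeomorph

section CantorAction

variable {X : Type*} [MetricSpace X] [CompactSpace X] {Γ : Type*} [Group Γ]
  {Φ : Γ →* (X ≃ₜ X)}

theorem isCompact_profiniteClosure (heqc : IsEquicontinuousAction Φ) :
    IsCompact (profiniteClosure Φ : Set (X ≃ₜ X)) := by
  refine Homeomorph.isCompact_topologicalClosure_of_equicontinuous Φ.range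
    (Metric.uniformEquicontinuous_iff.2 fun ε hε => ?_).equicontinuous
  obtain ⟨δ, hδ, hΦδ⟩ := heqc ε hε
  exact ⟨δ, hδ, fun x y hxy ⟨_, g, hg⟩ => hg ▸ hΦδ x y hxy g⟩

theorem apply_mem_profiniteClosure (g : Γ) : Φ g ∈ profiniteClosure Φ :=
  Subgroup.le_topologicalClosure _ ⟨g, rfl⟩

/-- Conjugating by an element of `Γ` moving `x₀` into `U` turns an element of `G(Φ)` fixing
`U` pointwise into an element of the discriminant at `x₀`. -/
theorem eq_one_of_forall_mem_apply_eq (hmin : IsMinimalAction Φ) {x₀ : X}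
    (hd : discriminant Φ x₀ = ⊥) {U : Set X} (hUo : IsOpen U) (hUne : U.Nonempty)
    {a : X ≃ₜ X} (ha : a ∈ profiniteClosure Φ) (hfix : ∀ x ∈ U, a x = x) : a = 1 := by
  obtain ⟨_, ⟨g, rfl⟩, hgU⟩ := (hmin x₀).exists_mem_open hUo hUne
  have hΦg := apply_mem_profiniteClosure (Φ := Φ) g
  have hconj : (⟨(Φ g)⁻¹ * a * Φ g, mul_mem (mul_mem (inv_mem hΦg) ha) hΦg⟩ :
      profiniteClosure Φ) ∈ discriminant Φ x₀ := by
    show ((Φ g)⁻¹ * a * Φ g) x₀ = x₀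
    simp [hfix _ hgU]
  rw [hd, Subgroup.mem_bot] at hconj
  have hconj' : (Φ g)⁻¹ * a * Φ g = 1 := congrArg Subtype.val hconj
  rwa [mul_assoc, inv_mul_eq_one, eq_comm, mul_eq_right] at hconj'

theorem range_holonomyHom_profiniteClosure (heqc : IsEquicontinuousAction Φ) {U : Set X}
    (hU : IsAdaptedSet Φ U) [CompactSpace U] :
    (holonomyHom (profiniteClosure Φ).subtype U).range =
      (holonomyGroup Φ U).topologicalClosure := by
  set G := profiniteClosure Φ
  have : CompactSpace G := isCompact_iff_compactSpace.1 (isCompact_profiniteClosure heqc)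
  have : CompactSpace (adaptedStabilizer G.subtype U) := isCompact_iff_compactSpace.1
    (Subgroup.isClosed_of_isOpen _ (isOpen_adaptedStabilizer_subtype G hU.2.1)).isCompact
  refine le_antisymm ?_ (Subgroup.topologicalClosure_minimal _ ?_
    (isCompact_range (continuous_holonomyHom_subtype G U)).isClosed)
  · rintro _ ⟨a, rfl⟩
    obtain ⟨ε₀, hε₀, hUε₀⟩ := hU.2.1.exists_pos_image_eq_of_dist_lt
    rw [← SetLike.mem_coe, Subgroup.topologicalClosure_coe, Metric.mem_closure_iff]
    intro ε hε
    have ha : (a : X ≃ₜ X) ∈ closure (Φ.range : Set (X ≃ₜ X)) := (a : G).2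
    obtain ⟨_, ⟨g, rfl⟩, hag⟩ := Metric.mem_closure_iff.1 ha (min ε ε₀) (lt_min hε hε₀)
    have hgU : Φ g '' U = U :=
      hUε₀ _ _ (dist_comm (a : X ≃ₜ X) _ ▸ hag.trans_le (min_le_right _ _)) a.2
    exact ⟨holonomyHom Φ U ⟨g, hgU⟩, ⟨_, rfl⟩,
      (dist_restrictHomeo_le a.2 hgU).trans_lt (hag.trans_le (min_le_left _ _))⟩
  · rintro _ ⟨⟨g, hg⟩, rfl⟩
    exact ⟨⟨⟨Φ g, apply_mem_profiniteClosure g⟩, hg⟩, rfl⟩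

theorem steinitzOrderAction_eq_ofNat_mul (hmin : IsMinimalAction Φ)
    (heqc : IsEquicontinuousAction Φ) {x₀ : X} (hd : discriminant Φ x₀ = ⊥) {U : Set X}
    (hU : IsAdaptedSet Φ U) [CompactSpace U] :
    ∃ d : ℕ, 0 < d ∧ steinitzOrderAction Φ =
      ofNat d * steinitzOrder (holonomyGroup Φ U).topologicalClosure := by
  set G := profiniteClosure Φ
  set GU := adaptedStabilizer G.subtype U
  have : CompactSpace G := isCompact_iff_compactSpace.1 (isCompact_profiniteClosure heqc)
  have hopen : IsOpen (GU : Set G) := isOpen_adaptedStabilizer_subtype G hU.2.1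
  have : CompactSpace GU := isCompact_iff_compactSpace.1
    (Subgroup.isClosed_of_isOpen _ hopen).isCompact
  have : Finite (G ⧸ GU) := Subgroup.quotient_finite_of_isOpen _ hopen
  have : GU.FiniteIndex := Subgroup.finiteIndex_of_finite_quotient
  have hinj : Function.Injective (holonomyHom G.subtype U) :=
    (injective_iff_map_eq_one _).2 fun a ha => Subtype.ext <| Subtype.ext <|
      eq_one_of_forall_mem_apply_eq hmin hd hU.2.1.isOpen hU.1 (a : G).2 fun x hx => by
        have := DFunLike.congr_fun ha ⟨x, hx⟩
        exact congrArg Subtype.val this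
  refine ⟨GU.index, Nat.pos_of_ne_zero Subgroup.FiniteIndex.index_ne_zero, ?_⟩
  rw [steinitzOrderAction, steinitzOrder_eq_ofNat_index_mul GU hopen,
    ← range_holonomyHom_profiniteClosure heqc hU, steinitzOrder_range_of_isEmbedding _
      ((continuous_holonomyHom_subtype G U).isClosedEmbedding hinj).isEmbedding]

end CantorAction

theorem steinitzOrder_asympEquiv_of_returnEquivalent_of_trivial_discriminant_general
    {X₁ : Type*} [MetricSpace X₁] [CompactSpace X₁]
    {Γ₁ : Type*} [Group Γ₁] (Φ₁ : Γ₁ →* (X₁ ≃ₜ X₁))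
    (hmin₁ : IsMinimalAction Φ₁) (heqc₁ : IsEquicontinuousAction Φ₁)
    {X₂ : Type*} [MetricSpace X₂] [CompactSpace X₂]
    {Γ₂ : Type*} [Group Γ₂] (Φ₂ : Γ₂ →* (X₂ ≃ₜ X₂))
    (hmin₂ : IsMinimalAction Φ₂) (heqc₂ : IsEquicontinuousAction Φ₂)
    (hre : ReturnEquivalent Φ₁ Φ₂) (x₁ : X₁) (x₂ : X₂)
    (hd₁ : discriminant Φ₁ x₁ = ⊥) (hd₂ : discriminant Φ₂ x₂ = ⊥) :
    SteinitzNum.AsympEquiv (steinitzOrderAction Φ₁) (steinitzOrderAction Φ₂) := by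
  obtain ⟨U₁, U₂, hU₁, hU₂, h, θ, hθ⟩ := hre
  have : CompactSpace U₁ := isCompact_iff_compactSpace.1 hU₁.2.1.isClosed.isCompact
  have : CompactSpace U₂ := isCompact_iff_compactSpace.1 hU₂.2.1.isClosed.isCompact
  obtain ⟨d₁, hd₁0, hΦ₁⟩ := steinitzOrderAction_eq_ofNat_mul hmin₁ heqc₁ hd₁ hU₁
  obtain ⟨d₂, hd₂0, hΦ₂⟩ := steinitzOrderAction_eq_ofNat_mul hmin₂ heqc₂ hd₂ hU₂
  have hH : (holonomyGroup Φ₁ U₁).map (h.conjContinuousMulEquiv : _ →* _) =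
      holonomyGroup Φ₂ U₂ := Subgroup.map_eq_of_mulEquiv _ θ hθ
  rw [hΦ₁, hΦ₂, ← hH, Subgroup.topologicalClosure_map_continuousMulEquiv, steinitzOrder_map]
  exact asympEquiv_ofNat_mul hd₁0 hd₂0 _

/-- For return equivalent minimal equicontinuous Cantor actions with
trivial discriminant groups, the Steinitz orders `Π[G(Φ)]` are asymptotically
equivalent. -/
theorem steinitzOrder_asympEquiv_of_returnEquivalent_of_trivial_discriminant
    {X₁ : Type*} [MetricSpace X₁] [CompactSpace X₁] [Nonempty X₁] [TotallyDisconnectedSpace X₁]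
    (hperf₁ : Perfect (Set.univ : Set X₁))
    {Γ₁ : Type*} [Group Γ₁] [Countable Γ₁] (Φ₁ : Γ₁ →* (X₁ ≃ₜ X₁))
    (hmin₁ : IsMinimalAction Φ₁) (heqc₁ : IsEquicontinuousAction Φ₁)
    {X₂ : Type*} [MetricSpace X₂] [CompactSpace X₂] [Nonempty X₂] [TotallyDisconnectedSpace X₂]
    (hperf₂ : Perfect (Set.univ : Set X₂))
    {Γ₂ : Type*} [Group Γ₂] [Countable Γ₂] (Φ₂ : Γ₂ →* (X₂ ≃ₜ X₂))
    (hmin₂ : IsMinimalAction Φ₂) (heqc₂ : IsEquicontinuousAction Φ₂)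
    (hre : ReturnEquivalent Φ₁ Φ₂) (x₁ : X₁) (x₂ : X₂)
    (hd₁ : discriminant Φ₁ x₁ = ⊥) (hd₂ : discriminant Φ₂ x₂ = ⊥) :
    SteinitzNum.AsympEquiv (steinitzOrderAction Φ₁) (steinitzOrderAction Φ₂) :=
  steinitzOrder_asympEquiv_of_returnEquivalent_of_trivial_discriminant_general Φ₁ hmin₁ heqc₁ Φ₂
    hmin₂ heqc₂ hre x₁ x₂ hd₁ hd₂
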